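/- Let Q be a finite quiver (possibly with directed cycles) and V a representation of Q over ℂ. For each ordered pair of vertices (i,j) let A_{ij} = {a ∈ Q₁ : ta = i, ha = j}, and choose B_{ij} ⊆ A_{ij} with span{V(a) : a ∈ B_{ij}} = span{V(a) : a ∈ A_{ij}} inside Hom(V(i), V(j)). Then for every integer K ≥ 1: there exists a closed walk C in Q of length between 1 and K with tr V(C) ≠ 0 if and only if there exists a closed walk C′ in Q of length between 1 and K all of whose arcs belong to ⋃_{i,j} B_{ij} and with tr V(C′) ≠ 0. -/

import Mathlib

/-!
`tr V(C)` is linear in each factor `V(a)`. Writing the trace with the factor of the first arc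
`a : i → j` isolated, `f ↦ tr (P ∘ ι_j ∘ f ∘ π_i)` is a linear functional on `Hom(V(i), V(j))`
that is nonzero at `V(a)`, so it is nonzero at some `V(b)` with `b ∈ B_{ij}`. Swapping `a` for
`b` keeps the walk closed and of the same length; cycling the trace brings the next arc into the
isolated position, and after `k` steps every arc lies in `B`.
-/

/-- The embedding of the linear map `V(a)` of an arc `a` as an endomorphism
`ι_{ha} ∘ V(a) ∘ π_{ta}` of the direct sum `Π i, Vv i`. -/
noncomputable def endAt {I A : Type} [DecidableEq I] {Vv : I → Type}
    [∀ i, AddCommGroup (Vv i)] [∀ i, Module ℂ (Vv i)]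
    (tl hd : A → I) (Vm : ∀ a : A, Vv (tl a) →ₗ[ℂ] Vv (hd a)) (a : A) :
    Module.End ℂ (∀ i, Vv i) :=
  (LinearMap.single ℂ Vv (hd a)).comp
    ((Vm a).comp (LinearMap.proj (R := ℂ) (φ := Vv) (tl a)))

/-- `V(a)` viewed as an element of `Hom(Vv i, Vv j)` when `tl a = i` and `hd a = j`
(and `0` otherwise). -/
noncomputable def homAt {I A : Type} [DecidableEq I] {Vv : I → Type}
    [∀ i, AddCommGroup (Vv i)] [∀ i, Module ℂ (Vv i)]
    (tl hd : A → I) (Vm : ∀ a : A, Vv (tl a) →ₗ[ℂ] Vv (hd a)) (i j : I) (a : A) :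
    Vv i →ₗ[ℂ] Vv j :=
  if e : tl a = i ∧ hd a = j then
    cast (by rw [e.1, e.2] : (Vv (tl a) →ₗ[ℂ] Vv (hd a)) = (Vv i →ₗ[ℂ] Vv j)) (Vm a)
  else 0

theorem Submodule.exists_mem_apply_ne_zero_of_mem_span {R M N : Type*} [Semiring R]
    [AddCommMonoid M] [Module R M] [AddCommMonoid N] [Module R N] (φ : M →ₗ[R] N)
    {s : Set M} {x : M} (hx : x ∈ span R s) (hφx : φ x ≠ 0) : ∃ y ∈ s, φ y ≠ 0 := by
  by_contra! h
  exact hφx (span_le.mpr (fun y hy => LinearMap.mem_ker.mpr (h y hy)) hx)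

theorem List.Forall₂.forall_mem_right {α β : Type*} {R : α → β → Prop} {p : β → Prop}
    (hp : ∀ a b, R a b → p b) : ∀ {l₁ l₂}, Forall₂ R l₁ l₂ → ∀ b ∈ l₂, p b
  | _, _, .nil => by simp
  | _, _, .cons hab h => by
    simpa only [mem_cons, forall_eq_or_imp] using ⟨hp _ _ hab, h.forall_mem_right hp⟩

theorem LinearMap.exists_forall₂_trace_mul_prod_ne_zero {R M α : Type*} [CommRing R]
    [AddCommGroup M] [Module R M] [Module.Free R M] [Module.Finite R M]
    (f : α → Module.End R M) (r : α → α → Prop)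
    (hr : ∀ P a, trace R M (P * f a) ≠ 0 → ∃ b, r a b ∧ trace R M (P * f b) ≠ 0)
    (l : List α) (P : Module.End R M) (h : trace R M (P * (l.map f).reverse.prod) ≠ 0) :
    ∃ l', l.Forall₂ r l' ∧ trace R M (P * (l'.map f).reverse.prod) ≠ 0 := by
  induction l generalizing P with
  | nil => exact ⟨[], .nil, h⟩
  | cons a t ih =>
    simp only [List.map_cons, List.reverse_cons, List.prod_append, List.prod_singleton,
      ← mul_assoc] at h ⊢
    obtain ⟨b, hab, hb⟩ := hr _ a h
    rw [trace_mul_comm, ← mul_assoc] at hb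
    obtain ⟨t', ht, ht'⟩ := ih (f b * P) hb
    refine ⟨b :: t', .cons hab ht, ?_⟩
    rwa [List.map_cons, List.reverse_cons, List.prod_append, List.prod_singleton, ← mul_assoc,
      trace_mul_comm, ← mul_assoc]

section Quiver

variable {I A : Type} {tl hd : A → I}

theorem exists_closed_walk_of_forall₂ {r : A → A → Prop}
    (hr : ∀ a b, r a b → tl b = tl a ∧ hd b = hd a) {l l' : List A} (hll' : l.Forall₂ r l')
    (hne : l ≠ []) (hchain : l.IsChain (fun a b => hd a = tl b))
    (hclosed : hd (l.getLast hne) = tl (l.head hne)) :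
    ∃ hne' : l' ≠ [], l'.IsChain (fun a b => hd a = tl b) ∧
      hd (l'.getLast hne') = tl (l'.head hne') := by
  have hends : l.map (fun a => (tl a, hd a)) = l'.map (fun a => (tl a, hd a)) := by
    rw [← List.forall₂_eq_eq_eq, List.forall₂_map_left_iff, List.forall₂_map_right_iff]
    exact hll'.imp fun a b hab => by rw [(hr a b hab).1, (hr a b hab).2]
  have hne' : l' ≠ [] := by
    simpa [← List.length_pos_iff, ← hll'.length_eq] using hne
  refine ⟨hne', ?_, ?_⟩
  · have hends_chain := (List.isChain_map (R := fun p q : I × I => p.2 = q.1)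
      (fun a => (tl a, hd a))).mpr hchain
    rwa [hends, List.isChain_map] at hends_chain
  · have hlast := congrArg (fun l => l.getLast?.map Prod.snd) hends
    have hhead := congrArg (fun l => l.head?.map Prod.fst) hends
    simp only [List.getLast?_map, List.getLast?_eq_some_getLast hne,
      List.getLast?_eq_some_getLast hne', Option.map_some, Option.some.injEq, List.head?_map,
      List.head?_eq_some_head hne, List.head?_eq_some_head hne'] at hlast hhead
    rw [← hlast, ← hhead, hclosed]

variable [DecidableEq I] {Vv : I → Type} [∀ i, AddCommGroup (Vv i)] [∀ i, Module ℂ (Vv i)]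
  {Vm : ∀ a : A, Vv (tl a) →ₗ[ℂ] Vv (hd a)}

theorem single_comp_homAt_comp_proj {i j : I} {a : A} (hi : tl a = i) (hj : hd a = j) :
    LinearMap.single ℂ Vv j ∘ₗ homAt tl hd Vm i j a ∘ₗ LinearMap.proj i = endAt tl hd Vm a := by
  subst hi hj
  rw [homAt, dif_pos ⟨rfl, rfl⟩, cast_eq]
  rfl

theorem exists_mem_trace_mul_endAt_ne_zero (B : I → I → Set A)
    (hBsub : ∀ i j, B i j ⊆ {a : A | tl a = i ∧ hd a = j})
    (hBspan : ∀ i j,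
      Submodule.span ℂ (homAt tl hd Vm i j '' B i j) =
        Submodule.span ℂ (homAt tl hd Vm i j '' {a : A | tl a = i ∧ hd a = j}))
    (P : Module.End ℂ (∀ i, Vv i)) (a : A)
    (h : LinearMap.trace ℂ _ (P * endAt tl hd Vm a) ≠ 0) :
    ∃ b ∈ B (tl a) (hd a), LinearMap.trace ℂ _ (P * endAt tl hd Vm b) ≠ 0 := by
  let φ : (Vv (tl a) →ₗ[ℂ] Vv (hd a)) →ₗ[ℂ] ℂ :=
    LinearMap.trace ℂ _ ∘ₗ LinearMap.mulLeft ℂ P ∘ₗ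
      LinearMap.compRight ℂ (LinearMap.single ℂ Vv (hd a)) ∘ₗ
      LinearMap.lcomp ℂ _ (LinearMap.proj (tl a))
  have hφ (b : A) (hi : tl b = tl a) (hj : hd b = hd a) :
      φ (homAt tl hd Vm (tl a) (hd a) b) = LinearMap.trace ℂ _ (P * endAt tl hd Vm b) := by
    rw [← single_comp_homAt_comp_proj hi hj]
    rfl
  have hmem : homAt tl hd Vm (tl a) (hd a) a ∈
      Submodule.span ℂ (homAt tl hd Vm (tl a) (hd a) '' B (tl a) (hd a)) :=
    hBspan _ _ ▸ Submodule.subset_span ⟨a, ⟨rfl, rfl⟩, rfl⟩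
  obtain ⟨_, ⟨b, hb, rfl⟩, hφb⟩ :=
    Submodule.exists_mem_apply_ne_zero_of_mem_span φ hmem (by rwa [hφ a rfl rfl])
  obtain ⟨hi, hj⟩ := hBsub _ _ hb
  exact ⟨b, hb, by rwa [← hφ b hi hj]⟩

end Quiver

theorem closed_walk_trace_reduce_arcs_general
    {I A : Type} [Fintype I] [DecidableEq I]
    (tl hd : A → I)
    (Vv : I → Type) [∀ i, AddCommGroup (Vv i)] [∀ i, Module ℂ (Vv i)]
    [∀ i, FiniteDimensional ℂ (Vv i)]
    (Vm : ∀ a : A, Vv (tl a) →ₗ[ℂ] Vv (hd a))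
    (B : I → I → Set A)
    (hBsub : ∀ i j, B i j ⊆ {a : A | tl a = i ∧ hd a = j})
    (hBspan : ∀ i j,
      Submodule.span ℂ (homAt tl hd Vm i j '' B i j) =
        Submodule.span ℂ (homAt tl hd Vm i j '' {a : A | tl a = i ∧ hd a = j}))
    (K : ℕ) :
    ((∃ (l : List A) (hne : l ≠ []),
        l.length ≤ K ∧
        l.Chain' (fun a b => hd a = tl b) ∧
        hd (l.getLast hne) = tl (l.head hne) ∧
        LinearMap.trace ℂ (∀ i, Vv i) ((l.map (endAt tl hd Vm)).reverse.prod) ≠ 0) ↔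
      (∃ (l : List A) (hne : l ≠ []),
        l.length ≤ K ∧
        l.Chain' (fun a b => hd a = tl b) ∧
        hd (l.getLast hne) = tl (l.head hne) ∧
        (∀ a ∈ l, a ∈ B (tl a) (hd a)) ∧
        LinearMap.trace ℂ (∀ i, Vv i) ((l.map (endAt tl hd Vm)).reverse.prod) ≠ 0)) := by
  refine ⟨?_, fun ⟨l, hne, hlen, hchain, hclosed, _, htr⟩ => ⟨l, hne, hlen, hchain, hclosed, htr⟩⟩
  rintro ⟨l, hne, hlen, hchain, hclosed, htr⟩
  have hB (a b : A) (hb : b ∈ B (tl a) (hd a)) : tl b = tl a ∧ hd b = hd a := hBsub _ _ hb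
  obtain ⟨l', hll', htr'⟩ := LinearMap.exists_forall₂_trace_mul_prod_ne_zero (endAt tl hd Vm)
    (fun a b => b ∈ B (tl a) (hd a)) (exists_mem_trace_mul_endAt_ne_zero B hBsub hBspan) l 1
    (by rwa [one_mul])
  obtain ⟨hne', hchain', hclosed'⟩ := exists_closed_walk_of_forall₂ hB hll' hne hchain hclosed
  refine ⟨l', hne', hll'.length_eq ▸ hlen, hchain', hclosed', ?_, by rwa [one_mul] at htr'⟩
  exact hll'.forall_mem_right fun a b hb => by rwa [(hB a b hb).1, (hB a b hb).2]

/-- Restricting the arcs between each pair of vertices to a spanning subset `B i j`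
of the corresponding maps preserves the existence of a closed walk of length between
`1` and `K` with nonzero trace (traces being computed via the embedded endomorphisms,
whose product along a chained closed walk `C` has trace `tr V(C)`). -/
theorem closed_walk_trace_reduce_arcs
    {I A : Type} [Fintype I] [Fintype A] [DecidableEq I]
    (tl hd : A → I)
    (Vv : I → Type) [∀ i, AddCommGroup (Vv i)] [∀ i, Module ℂ (Vv i)]
    [∀ i, FiniteDimensional ℂ (Vv i)]
    (Vm : ∀ a : A, Vv (tl a) →ₗ[ℂ] Vv (hd a))
    (B : I → I → Set A)
    (hBsub : ∀ i j, B i j ⊆ {a : A | tl a = i ∧ hd a = j})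
    (hBspan : ∀ i j,
      Submodule.span ℂ (homAt tl hd Vm i j '' B i j) =
        Submodule.span ℂ (homAt tl hd Vm i j '' {a : A | tl a = i ∧ hd a = j}))
    (K : ℕ) (hK : 1 ≤ K) :
    ((∃ (l : List A) (hne : l ≠ []),
        l.length ≤ K ∧
        l.Chain' (fun a b => hd a = tl b) ∧
        hd (l.getLast hne) = tl (l.head hne) ∧
        LinearMap.trace ℂ (∀ i, Vv i) ((l.map (endAt tl hd Vm)).reverse.prod) ≠ 0) ↔
      (∃ (l : List A) (hne : l ≠ []),
        l.length ≤ K ∧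
        l.Chain' (fun a b => hd a = tl b) ∧
        hd (l.getLast hne) = tl (l.head hne) ∧
        (∀ a ∈ l, a ∈ B (tl a) (hd a)) ∧
        LinearMap.trace ℂ (∀ i, Vv i) ((l.map (endAt tl hd Vm)).reverse.prod) ≠ 0)) :=
  closed_walk_trace_reduce_arcs_general tl hd Vv Vm B hBsub hBspan K
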